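/- arXiv:2303.06997 — 2 statements merged into one kernel-verified Lean document; each statement's English description precedes it below -/
import Mathlib

section
/- In the EMS linear program, suppose the purchase tariff strictly exceeds the selling tariff at every time step, i.e. cg⁺(t) > cg⁻(t) for all t. Then every optimal feasible solution (one whose cost C is less than or equal to the cost of every feasible solution) satisfies Pg⁺(t)·Pg⁻(t) = 0 for all t; that is, the microgrid never simultaneously purchases power from and sells power to the utility grid. (Indeed, if Pg⁺(t₀) > 0 and Pg⁻(t₀) < 0 for some t₀, decreasing both Pg⁺(t₀) and −Pg⁻(t₀) by δ = min(Pg⁺(t₀), −Pg⁻(t₀)) preserves feasibility and strictly decreases the cost.) -/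
open Finset

/-- State of energy of the battery: `SoE 0 = SoE₀` and
`SoE (t+1) = SoE t − Pdis t·Δt/(η·Enom) − Pch t·η·ηE·Δt/Enom`. -/
noncomputable def soe (SoE0 Δt η ηE Enom : ℝ) (Pdis Pch : ℕ → ℝ) : ℕ → ℝ
  | 0 => SoE0
  | t + 1 => soe SoE0 Δt η ηE Enom Pdis Pch t
      - Pdis t * Δt / (η * Enom) - Pch t * η * ηE * Δt / Enom

/-- Feasibility of a solution `(Pgp, Pgm, Pdis, Pch)` of the day-ahead EMS linear
program over the horizon `T`. -/
noncomputable def Feasible (T : ℕ) (Δt η ηE Enom Pdismax Pchmax Pgmin Pgmax SoE0 SoEmin SoEmax : ℝ)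
    (Ppv Pload Pgp Pgm Pdis Pch : ℕ → ℝ) : Prop :=
  (∀ t < T, 0 ≤ Pgp t ∧ Pgm t ≤ 0) ∧
  (∀ t < T, Pgp t + Pgm t + Pdis t + Pch t + Ppv t = Pload t) ∧
  (∀ t < T, Pgmin ≤ Pgp t + Pgm t ∧ Pgp t + Pgm t ≤ Pgmax) ∧
  (∀ t < T, 0 ≤ Pdis t ∧ Pdis t ≤ Pdismax * η) ∧
  (∀ t < T, Pchmax / (η * ηE) ≤ Pch t ∧ Pch t ≤ 0) ∧
  (∀ t ≤ T, SoEmin ≤ soe SoE0 Δt η ηE Enom Pdis Pch t ∧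
      soe SoE0 Δt η ηE Enom Pdis Pch t ≤ SoEmax)

/-- Cost `C = Δt·Σ_t [cg⁺(t)·Pg⁺(t) + cg⁻(t)·Pg⁻(t) + cst·(Pdis(t) − Pch(t))]`. -/
noncomputable def cost (T : ℕ) (Δt cst : ℝ) (cgp cgm : ℕ → ℝ)
    (Pgp Pgm Pdis Pch : ℕ → ℝ) : ℝ :=
  Δt * ∑ t ∈ Finset.range T,
    (cgp t * Pgp t + cgm t * Pgm t + cst * (Pdis t - Pch t))

/-- if the purchase tariff strictly exceeds the selling tariff at every
time step, then every optimal feasible solution of the EMS linear program satisfies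
`Pg⁺(t)·Pg⁻(t) = 0` for all `t`: the microgrid never simultaneously purchases power
from and sells power to the utility grid. -/
theorem no_simultaneous_purchase_and_sale
    (T : ℕ) (Δt η ηE Enom Pdismax Pchmax Pgmin Pgmax SoE0 SoEmin SoEmax cst : ℝ)
    (cgp cgm Ppv Pload : ℕ → ℝ)
    (hΔt : 0 < Δt) (hη : 0 < η) (hη1 : η ≤ 1) (hηE : 0 < ηE) (hηE1 : ηE ≤ 1)
    (hE : 0 < Enom) (hdm : 0 ≤ Pdismax) (hcm : Pchmax ≤ 0)
    (hgmin : Pgmin ≤ 0) (hgmax : 0 ≤ Pgmax) (hcst : 0 ≤ cst)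
    (htariff : ∀ t < T, cgm t < cgp t)
    (Pgp Pgm Pdis Pch : ℕ → ℝ)
    (hfeas : Feasible T Δt η ηE Enom Pdismax Pchmax Pgmin Pgmax SoE0 SoEmin SoEmax
      Ppv Pload Pgp Pgm Pdis Pch)
    (hopt : ∀ Pgp' Pgm' Pdis' Pch' : ℕ → ℝ,
      Feasible T Δt η ηE Enom Pdismax Pchmax Pgmin Pgmax SoE0 SoEmin SoEmax
        Ppv Pload Pgp' Pgm' Pdis' Pch' →
      cost T Δt cst cgp cgm Pgp Pgm Pdis Pch ≤ cost T Δt cst cgp cgm Pgp' Pgm' Pdis' Pch') :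
    ∀ t < T, Pgp t * Pgm t = 0 := by
  intro t0 ht0
  by_contra hne
  obtain ⟨hnn, hbal, hgb, hdisb, hchb, hsoe⟩ := hfeas
  obtain ⟨hp0, hm0⟩ := hnn t0 ht0
  have hp : 0 < Pgp t0 := lt_of_le_of_ne hp0 (by
    intro h; apply hne; rw [← h]; ring)
  have hm : Pgm t0 < 0 := lt_of_le_of_ne hm0 (by
    intro h; apply hne; rw [h]; ring)
  set δ : ℝ := min (Pgp t0) (-(Pgm t0)) with hδdef
  have hδ : 0 < δ := lt_min hp (by linarith)
  have hδp : δ ≤ Pgp t0 := min_le_left _ _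
  have hδm : δ ≤ -(Pgm t0) := min_le_right _ _
  set Pgp' : ℕ → ℝ := fun t => if t = t0 then Pgp t0 - δ else Pgp t with hPgp'
  set Pgm' : ℕ → ℝ := fun t => if t = t0 then Pgm t0 + δ else Pgm t with hPgm'
  have hsum : ∀ t, Pgp' t + Pgm' t = Pgp t + Pgm t := by
    intro t
    simp only [hPgp', hPgm']
    by_cases h : t = t0 <;> simp [h] <;> ring
  have hfeas' : Feasible T Δt η ηE Enom Pdismax Pchmax Pgmin Pgmax SoE0 SoEmin SoEmax
      Ppv Pload Pgp' Pgm' Pdis Pch := by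
    refine ⟨?_, ?_, ?_, hdisb, hchb, hsoe⟩
    · intro t ht
      simp only [hPgp', hPgm']
      by_cases h : t = t0
      · subst h; simp; constructor <;> linarith
      · simp [h]; exact hnn t ht
    · intro t ht
      have := hbal t ht
      have := hsum t
      linarith
    · intro t ht
      rw [hsum t]; exact hgb t ht
  have hle := hopt Pgp' Pgm' Pdis Pch hfeas'
  unfold cost at hle
  have hc : 0 < δ * (cgp t0 - cgm t0) :=
    mul_pos hδ (by have := htariff t0 ht0; linarith)
  have hsumeq : ∑ t ∈ Finset.range T,
      (cgp t * Pgp' t + cgm t * Pgm' t + cst * (Pdis t - Pch t))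
      = (∑ t ∈ Finset.range T,
        (cgp t * Pgp t + cgm t * Pgm t + cst * (Pdis t - Pch t)))
        - δ * (cgp t0 - cgm t0) := by
    have key : ∑ t ∈ Finset.range T,
        ((cgp t * Pgp' t + cgm t * Pgm' t + cst * (Pdis t - Pch t))
          - (cgp t * Pgp t + cgm t * Pgm t + cst * (Pdis t - Pch t)))
        = - (δ * (cgp t0 - cgm t0)) := by
      have : ∀ t ∈ Finset.range T,
          ((cgp t * Pgp' t + cgm t * Pgm' t + cst * (Pdis t - Pch t))
            - (cgp t * Pgp t + cgm t * Pgm t + cst * (Pdis t - Pch t)))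
          = if t = t0 then - (δ * (cgp t0 - cgm t0)) else 0 := by
        intro t _
        simp only [hPgp', hPgm']
        by_cases h : t = t0
        · subst h; simp; ring
        · simp [h]
      rw [Finset.sum_congr rfl this, Finset.sum_ite_eq' (Finset.range T) t0]
      simp [Finset.mem_range.mpr ht0]
    rw [Finset.sum_sub_distrib] at key
    linarith
  rw [hsumeq] at hle
  nlinarith
end

section
/- In the EMS linear program, suppose cst > 0. Let x be a feasible solution, and suppose there is a time t₀ with Pdis(t₀) > 0 and Pch(t₀) < 0 (simultaneous charging and discharging), and suppose moreover that SoE(s) < SoEmax for all s with t₀ < s ≤ T. Then x is not optimal: there exists a feasible solution with strictly smaller cost. (For small δ > 0, replacing Pdis(t₀) by Pdis(t₀) − δ and Pch(t₀) by Pch(t₀) + δ preserves the power balance and the grid variables, raises SoE(s) for s > t₀ by δ·Δt·(1/η − η·ηE)/Enom ≥ 0 — which stays below SoEmax for δ small enough since the strict inequalities hold at finitely many times — and decreases the cost by 2·cst·δ·Δt > 0.) Consequently, any optimal solution whose state of energy stays strictly below SoEmax at all times t ≥ 1 satisfies Pdis(t)·Pch(t) = 0 for all t: the battery is never simultaneously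 charged and discharged. -/
open Finset

/-- with `cst > 0`, a feasible solution that simultaneously charges
and discharges the battery at some time `t₀` (`Pdis(t₀) > 0` and `Pch(t₀) < 0`),
and whose state of energy stays strictly below `SoEmax` at all times `s` with
`t₀ < s ≤ T`, is not optimal: there exists a feasible solution with strictly
smaller cost. -/
theorem simultaneous_charge_discharge_not_optimal
    (T : ℕ) (Δt η ηE Enom Pdismax Pchmax Pgmin Pgmax SoE0 SoEmin SoEmax cst : ℝ)
    (cgp cgm Ppv Pload : ℕ → ℝ)
    (hΔt : 0 < Δt) (hη : 0 < η) (hη1 : η ≤ 1) (hηE : 0 < ηE) (hηE1 : ηE ≤ 1)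
    (hE : 0 < Enom) (hdm : 0 ≤ Pdismax) (hcm : Pchmax ≤ 0)
    (hgmin : Pgmin ≤ 0) (hgmax : 0 ≤ Pgmax) (hcst : 0 < cst)
    (Pgp Pgm Pdis Pch : ℕ → ℝ)
    (hfeas : Feasible T Δt η ηE Enom Pdismax Pchmax Pgmin Pgmax SoE0 SoEmin SoEmax
      Ppv Pload Pgp Pgm Pdis Pch)
    (t0 : ℕ) (ht0 : t0 < T) (hdis : 0 < Pdis t0) (hch : Pch t0 < 0)
    (hstrict : ∀ s, t0 < s → s ≤ T →
      soe SoE0 Δt η ηE Enom Pdis Pch s < SoEmax) :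
    ∃ Pgp' Pgm' Pdis' Pch' : ℕ → ℝ,
      Feasible T Δt η ηE Enom Pdismax Pchmax Pgmin Pgmax SoE0 SoEmin SoEmax
        Ppv Pload Pgp' Pgm' Pdis' Pch' ∧
      cost T Δt cst cgp cgm Pgp' Pgm' Pdis' Pch' <
        cost T Δt cst cgp cgm Pgp Pgm Pdis Pch := by
  classical
  obtain ⟨hg0, hbal, hgb, hdb, hcb, hsoe⟩ := hfeas
  set K : ℝ := Δt / (η * Enom) - η * ηE * Δt / Enom with hKdef
  have hK0 : 0 ≤ K := by
    rw [hKdef, sub_nonneg, div_le_div_iff₀ (by positivity) (by positivity)]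
    have hx : η * η * ηE ≤ 1 := by nlinarith
    nlinarith [mul_le_mul_of_nonneg_right hx (mul_pos hΔt hE).le]
  have hne : (Finset.Icc (t0 + 1) T).Nonempty := ⟨T, by simp; omega⟩
  set M : ℝ := (Finset.Icc (t0 + 1) T).inf' hne
      (fun s => SoEmax - soe SoE0 Δt η ηE Enom Pdis Pch s) with hMdef
  have hM0 : 0 < M := by
    rw [hMdef, Finset.lt_inf'_iff]
    intro s hs
    simp only [Finset.mem_Icc] at hs
    have := hstrict s (by omega) hs.2
    linarith
  set δ : ℝ := min (min (Pdis t0) (-Pch t0)) (M / (K + 1)) with hδdef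
  have hδ0 : 0 < δ := by
    apply lt_min (lt_min hdis (by linarith)) (by positivity)
  have hδd : δ ≤ Pdis t0 := le_trans (min_le_left _ _) (min_le_left _ _)
  have hδc : δ ≤ -Pch t0 := le_trans (min_le_left _ _) (min_le_right _ _)
  have hδK : δ * K ≤ M := by
    have h1 : δ ≤ M / (K + 1) := min_le_right _ _
    have h2 : δ * K ≤ M / (K + 1) * K :=
      mul_le_mul_of_nonneg_right h1 hK0
    have h3 : M / (K + 1) * K ≤ M := by
      rw [div_mul_eq_mul_div, div_le_iff₀ (by linarith)]
      nlinarith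
    exact le_trans h2 h3
  set Pdis' : ℕ → ℝ := fun t => if t = t0 then Pdis t0 - δ else Pdis t with hPd
  set Pch' : ℕ → ℝ := fun t => if t = t0 then Pch t0 + δ else Pch t with hPc
  have hsoe' : ∀ s, soe SoE0 Δt η ηE Enom Pdis' Pch' s =
      soe SoE0 Δt η ηE Enom Pdis Pch s + (if t0 < s then δ * K else 0) := by
    intro s
    induction s with
    | zero => simp [soe]
    | succ n ih =>
      rw [soe, soe, ih]
      by_cases h : n = t0
      · subst h
        simp only [hPd, hPc, if_pos rfl, if_neg (lt_irrefl n),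
          if_pos (Nat.lt_succ_self n), hKdef]
        field_simp
        ring
      · have hPdn : Pdis' n = Pdis n := by simp [hPd, h]
        have hPcn : Pch' n = Pch n := by simp [hPc, h]
        rw [hPdn, hPcn]
        by_cases h2 : t0 < n
        · rw [if_pos h2, if_pos (by omega)]; ring
        · rw [if_neg h2, if_neg (by omega)]; ring
  refine ⟨Pgp, Pgm, Pdis', Pch', ⟨hg0, ?_, hgb, ?_, ?_, ?_⟩, ?_⟩
  · intro t ht
    by_cases h : t = t0
    · subst h
      simp only [hPd, hPc, if_pos rfl]
      have := hbal t ht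
      linarith
    · simp only [hPd, hPc, if_neg h]
      exact hbal t ht
  · intro t ht
    by_cases h : t = t0
    · subst h
      simp only [hPd, if_pos rfl]
      have := hdb t ht
      constructor <;> linarith [this.1, this.2]
    · simp only [hPd, if_neg h]
      exact hdb t ht
  · intro t ht
    by_cases h : t = t0
    · subst h
      simp only [hPc, if_pos rfl]
      have := hcb t ht
      constructor <;> linarith [this.1, this.2]
    · simp only [hPc, if_neg h]
      exact hcb t ht
  · intro t ht
    rw [hsoe' t]
    have hs := hsoe t ht
    by_cases h : t0 < t
    · rw [if_pos h]
      have hM : M ≤ SoEmax - soe SoE0 Δt η ηE Enom Pdis Pch t := by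
        rw [hMdef]
        exact Finset.inf'_le _ (by simp [Finset.mem_Icc]; omega)
      refine ⟨by nlinarith [hs.1, mul_nonneg hδ0.le hK0], by linarith⟩
    · rw [if_neg h]
      exact ⟨by linarith [hs.1], by linarith [hs.2]⟩
  · unfold cost
    have ht0mem : t0 ∈ Finset.range T := Finset.mem_range.mpr ht0
    have h1 : ∀ t ∈ (Finset.range T).erase t0,
        cgp t * Pgp t + cgm t * Pgm t + cst * (Pdis' t - Pch' t) =
        cgp t * Pgp t + cgm t * Pgm t + cst * (Pdis t - Pch t) := by
      intro t ht
      have := Finset.ne_of_mem_erase ht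
      simp [hPd, hPc, this]
    have h2 := Finset.sum_congr rfl h1
    rw [← Finset.add_sum_erase _
        (fun t => cgp t * Pgp t + cgm t * Pgm t + cst * (Pdis' t - Pch' t)) ht0mem,
      ← Finset.add_sum_erase _
        (fun t => cgp t * Pgp t + cgm t * Pgm t + cst * (Pdis t - Pch t)) ht0mem,
      h2]
    simp only [hPd, hPc, if_pos rfl]
    have hpos : 0 < Δt * (2 * cst * δ) := by positivity
    nlinarith [hpos]
end
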